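/- (Proposition 3) Suppose the buyer has ordered model M_r with r ∈ {2,…,N} at price p_r satisfying p_r ≤ U_r, and verification is uneconomical, i.e. C_T > p_r − U_1. Then the profile in which the seller delivers s = 1 and the buyer does not verify (v = NV) is the unique pure Nash equilibrium of Game 1: it is a PNE, and every PNE has s = 1 and v = NV. -/
import Mathlib


/-- The acceptance probability `δ(θ, α)` of a model of quality `α` under verification with
test data size `T` and acceptance criterion `θ` (so `delta T 0 α = 1` for `α ∈ [0,1]` and
`delta T (T+1) α = 0`). -/
noncomputable def delta (T θ : ℕ) (α : ℝ) : ℝ :=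
  ∑ i ∈ Finset.Icc θ T, (T.choose i : ℝ) * α ^ i * (1 - α) ^ (T - i)

/-- Buyer's payoff in Game 1 when the ordered model has price `p`: the buyer strategy is
`none` (no verification, NV) or `some θ` (verify with criterion `θ`), and the seller
delivers model `s`. -/
noncomputable def buyerPayoff (T : ℕ) (α U : ℕ → ℝ) (p CT : ℝ) (s : ℕ) (b : Option ℕ) : ℝ :=
  match b with
  | none => U s - p
  | some θ => delta T θ (α s) * (U s - p) - CT

/-- Seller's payoff in Game 1 when the ordered model has price `p`. -/
noncomputable def sellerPayoff (T : ℕ) (α C : ℕ → ℝ) (p : ℝ) (s : ℕ) (b : Option ℕ) : ℝ :=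
  match b with
  | none => p - C s
  | some θ => delta T θ (α s) * (p - C s)

/-- Pure Nash equilibrium of Game 1 (after the buyer has ordered a model at price `p`):
the seller's delivery `s ∈ {1,…,N}` and the buyer's verification decision
(`none` = NV, `some θ` = verify with criterion `θ ≤ T+1`) are mutual best responses. -/
def IsPNE (N T : ℕ) (α U C : ℕ → ℝ) (p CT : ℝ) (s : ℕ) (b : Option ℕ) : Prop :=
  s ∈ Finset.Icc 1 N ∧ (∀ θ ∈ b, θ ≤ T + 1) ∧
  (∀ s' ∈ Finset.Icc 1 N, sellerPayoff T α C p s' b ≤ sellerPayoff T α C p s b) ∧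
  (buyerPayoff T α U p CT s none ≤ buyerPayoff T α U p CT s b) ∧
  (∀ θ ≤ T + 1, buyerPayoff T α U p CT s (some θ) ≤ buyerPayoff T α U p CT s b)


lemma delta_nonneg (T θ : ℕ) {α : ℝ} (h0 : 0 ≤ α) (h1 : α ≤ 1) : 0 ≤ delta T θ α := by
  apply Finset.sum_nonneg
  intro i _
  have : (0:ℝ) ≤ 1 - α := by linarith
  positivity

lemma delta_zero (T : ℕ) {α : ℝ} : delta T 0 α = 1 := by
  unfold delta
  have h : Finset.Icc 0 T = Finset.range (T + 1) := by
    ext i; simp [Nat.lt_succ_iff]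
  rw [h]
  have hb := add_pow α (1 - α) T
  simp only [add_sub_cancel, one_pow] at hb
  conv_rhs => rw [hb]
  apply Finset.sum_congr rfl
  intro i _
  ring

lemma delta_le_one (T θ : ℕ) {α : ℝ} (h0 : 0 ≤ α) (h1 : α ≤ 1) : delta T θ α ≤ 1 := by
  have hsub : Finset.Icc θ T ⊆ Finset.Icc 0 T := by
    intro i hi; simp only [Finset.mem_Icc] at *; omega
  have h : delta T θ α ≤ delta T 0 α := by
    unfold delta
    apply Finset.sum_le_sum_of_subset_of_nonneg hsub
    intro i _ _
    have : (0:ℝ) ≤ 1 - α := by linarith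
    positivity
  linarith [delta_zero (α := α) T]

lemma delta_top (T : ℕ) (α : ℝ) : delta T (T + 1) α = 0 := by
  unfold delta
  rw [Finset.Icc_eq_empty (by omega)]
  simp

/-- Proposition 3: if the buyer ordered model `M_r` (`r ∈ {2,…,N}`) at price `p_r ≤ U_r`
and verification is uneconomical (`CT > p_r − U_1`), then (deliver `M_1`, do not verify)
is the unique pure Nash equilibrium of Game 1. -/
theorem prop3 (N T : ℕ) (hN : 1 ≤ N) (hT : 1 ≤ T)
    (r : ℕ) (hr : r ∈ Finset.Icc 2 N)
    (α U C : ℕ → ℝ) (pr CT : ℝ)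
    (hα0 : 0 ≤ α 1) (hα1 : α N ≤ 1) (hαmono : MonotoneOn α (Set.Icc 1 N))
    (hU0 : 0 ≤ U 1) (hUmono : MonotoneOn U (Set.Icc 1 N))
    (hC0 : 0 < C 1) (hCmono : StrictMonoOn C (Set.Icc 1 N))
    (hCT : 0 < CT) (hpU : pr ≤ U r)
    (huneconomical : pr - U 1 < CT) :
    IsPNE N T α U C pr CT 1 none ∧
      ∀ s b, IsPNE N T α U C pr CT s b → s = 1 ∧ b = none := by
  have h1N : (1:ℕ) ∈ Finset.Icc 1 N := by simp [hN]
  have h1set : (1:ℕ) ∈ Set.Icc 1 N := by simp [hN]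
  -- α s ∈ [0,1] for s ∈ [1,N]
  have hα : ∀ s ∈ Finset.Icc 1 N, 0 ≤ α s ∧ α s ≤ 1 := by
    intro s hs
    simp only [Finset.mem_Icc] at hs
    have hsset : s ∈ Set.Icc 1 N := by simp [hs.1, hs.2]
    have hNset : N ∈ Set.Icc 1 N := by simp [hN]
    constructor
    · exact le_trans hα0 (hαmono h1set hsset hs.1)
    · exact le_trans (hαmono hsset hNset hs.2) hα1
  constructor
  · refine ⟨h1N, by simp, ?_, le_refl _, ?_⟩
    · intro s' hs'
      simp only [Finset.mem_Icc] at hs'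
      have : C 1 ≤ C s' :=
        hCmono.monotoneOn h1set (by simp [hs'.1, hs'.2]) hs'.1
      simp only [sellerPayoff]
      linarith
    · intro θ _
      obtain ⟨h0, h1⟩ := hα 1 h1N
      have hd0 := delta_nonneg T θ h0 h1
      have hd1 := delta_le_one T θ h0 h1
      simp only [buyerPayoff]
      rcases le_or_gt pr (U 1) with h | h
      · nlinarith
      · nlinarith
  · rintro s b ⟨hs, _, hsell, hbuyNV, hbuy⟩
    obtain ⟨hαs0, hαs1⟩ := hα s hs
    simp only [Finset.mem_Icc] at hs
    have hsset : s ∈ Set.Icc 1 N := by simp [hs.1, hs.2]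
    have hUs : U 1 ≤ U s := hUmono h1set hsset hs.1
    cases b with
    | none =>
      refine ⟨?_, rfl⟩
      by_contra hne
      have h1s : 1 < s := lt_of_le_of_ne hs.1 (Ne.symm hne)
      have hC : C 1 < C s := hCmono h1set hsset h1s
      have := hsell 1 h1N
      simp only [sellerPayoff] at this
      linarith
    | some θ =>
      exfalso
      set d := delta T θ (α s) with hd
      have hd0 := delta_nonneg T θ hαs0 hαs1
      have hd1 := delta_le_one T θ hαs0 hαs1
      have hTop := hbuy (T + 1) le_rfl
      simp only [buyerPayoff, delta_top] at hTop
      simp only [buyerPayoff] at hbuyNV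
      rw [← hd] at hTop hbuyNV hd0 hd1
      -- hTop : 0 * (U s - pr) - CT ≤ d * (U s - pr) - CT
      have hdx : 0 ≤ d * (U s - pr) := by linarith [hTop]
      nlinarith [mul_nonneg (by linarith : (0:ℝ) ≤ 1 - d)
        (by linarith : (0:ℝ) ≤ U s - pr + CT), mul_nonneg hd0 hCT.le]
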